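/- For n ≥ 3, the mincut graph of the Cartesian product K_n □ K_2 is isomorphic to the join K_1 ∨ (K_n □ K_2), and the mincut graph of K_1 ∨ (K_n □ K_2) is isomorphic to K_n □ K_2. Hence K_n □ K_2 is periodic with period 2 under the mincut operator. -/

import Mathlib

open SimpleGraph

/-- `X` is an edge-cut of the connected graph `G`: a set of edges of `G` whose
deletion disconnects `G`. -/
def IsEdgeCut {V : Type*} (G : SimpleGraph V) (X : Finset (Sym2 V)) : Prop :=
  G.Connected ∧ ↑X ⊆ G.edgeSet ∧ ¬(G.deleteEdges ↑X).Connected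

/-- The edge-connectivity `λ(G)`: the minimum cardinality of an edge-cut. -/
noncomputable def edgeConn {V : Type*} (G : SimpleGraph V) : ℕ :=
  sInf {n | ∃ X : Finset (Sym2 V), X.card = n ∧ IsEdgeCut G X}

/-- A mincut is an edge-cut of minimum cardinality. -/
def IsMincut {V : Type*} (G : SimpleGraph V) (X : Finset (Sym2 V)) : Prop :=
  IsEdgeCut G X ∧ X.card = edgeConn G

/-- The mincut graph `X(G)`: the intersection graph of the mincuts of `G`. -/
def mincutGraph {V : Type*} [DecidableEq V] (G : SimpleGraph V) :
    SimpleGraph {X : Finset (Sym2 V) // IsMincut G X} :=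
  SimpleGraph.fromRel (fun X Y => (X.1 ∩ Y.1).Nonempty)

/-- A mincut is trivial if it is the set of edges incident on a single vertex. -/
def IsTrivialMincut {V : Type*} (G : SimpleGraph V) (X : Finset (Sym2 V)) : Prop :=
  IsMincut G X ∧ ∃ v : V, ↑X = G.incidenceSet v

/-- `MincutSides G X A` says `X` is a mincut of `G` whose two sides are `A` and `Aᶜ`,
i.e. `X = ⟨A, Ā⟩`. -/
def MincutSides {V : Type*} (G : SimpleGraph V) (X : Finset (Sym2 V)) (A : Set V) : Prop :=
  IsMincut G X ∧ A.Nonempty ∧ Aᶜ.Nonempty ∧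
  (↑X = {e | e ∈ G.edgeSet ∧ ∃ a ∈ A, ∃ b ∈ Aᶜ, e = s(a, b)}) ∧
  (G.induce A).Connected ∧ (G.induce Aᶜ).Connected

/-- Two mincuts with sides `A` and `B` cross (overlap). -/
def Crossing {V : Type*} (A B : Set V) : Prop :=
  (A ∩ B).Nonempty ∧ (Aᶜ ∩ B).Nonempty ∧ (A ∩ Bᶜ).Nonempty ∧ (Aᶜ ∩ Bᶜ).Nonempty

/-- The number of edges of `G` with one endpoint in `S` and the other in `T`. -/
noncomputable def betweenEdges {V : Type*} (G : SimpleGraph V) (S T : Set V) : ℕ :=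
  {e | e ∈ G.edgeSet ∧ ∃ a ∈ S, ∃ b ∈ T, e = s(a, b)}.ncard

/-- The join `K₁ ∨ H`: a new vertex adjacent to every vertex of `H`. -/
def coneGraph {W : Type*} (H : SimpleGraph W) : SimpleGraph (Unit ⊕ W) :=
  SimpleGraph.fromRel (fun a b =>
    match a, b with
    | Sum.inl _, Sum.inr _ => True
    | Sum.inr x, Sum.inr y => H.Adj x y
    | _, _ => False)

/-!
A mincut of a connected graph is an edge boundary `∂A = E(A, Aᶜ)` with `∅ ≠ A ≠ V` of least
size. In `Kₙ □ K₂`, if `A₀, A₁ ⊆ Fin n` are the traces of `A` on the two copies of `Kₙ`, then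
`|∂A| = |A₀|(n - |A₀|) + |A₁|(n - |A₁|) + |A₀ \ A₁| + |A₁ \ A₀|`. Passing to the complement we
may assume `|A₀| + |A₁| ≤ n`; then `|∂A| ≥ n`, and for `n ≥ 3` equality forces `A` to be a vertex
or a copy of `Kₙ`. So the mincuts are the `2n` vertex stars and the perfect matching, which meets
every star: `X(Kₙ □ K₂) ≅ K₁ ∨ (Kₙ □ K₂)`, the matching being the apex.

In a cone `K₁ ∨ H`, a set `A` containing the apex has `|∂A| = |H \ A| + |∂_H (A ∩ H)|`. If `H` is
`k`-regular, all its edge boundaries have size at least `k`, and `|H| > k + 1`, this is at least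
`k + 1`, with equality only when `A` misses exactly one vertex of `H`. So the mincuts of `K₁ ∨ H`
are the stars of the vertices of `H` and `X(K₁ ∨ H) ≅ H`; for `H = Kₙ □ K₂` take `k = n`.

Mincut graphs of isomorphic graphs are isomorphic, which gives `X(X(Kₙ □ K₂)) ≅ Kₙ □ K₂`, and
`K₁ ∨ G` has one vertex more than `G`, so the period is not `1`.
-/

open Finset

section EdgeBoundary

variable {V : Type*} [Fintype V] [DecidableEq V] (G : SimpleGraph V) [DecidableRel G.Adj]

def edgeBoundary (A : Finset V) : Finset (Sym2 V) :=
  (G.interedges A Aᶜ).image fun p => s(p.1, p.2)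

variable {G}

lemma mem_edgeBoundary {A : Finset V} {e : Sym2 V} :
    e ∈ edgeBoundary G A ↔ ∃ a ∈ A, ∃ b ∉ A, G.Adj a b ∧ s(a, b) = e := by
  simp [edgeBoundary, SimpleGraph.mem_interedges_iff, and_assoc]

lemma card_edgeBoundary (A : Finset V) :
    #(edgeBoundary G A) = #(G.interedges A Aᶜ) := by
  refine card_image_of_injOn fun p hp q hq hpq => ?_
  simp only [mem_coe, SimpleGraph.mem_interedges_iff, mem_compl] at hp hq
  rcases Sym2.mk_eq_mk_iff.1 hpq with h | h
  · exact h
  · subst h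
    exact absurd hp.1 hq.2.1

lemma edgeBoundary_compl (A : Finset V) : edgeBoundary G Aᶜ = edgeBoundary G A := by
  ext e
  simp only [mem_edgeBoundary, mem_compl, not_not]
  constructor <;>
  · rintro ⟨a, ha, b, hb, hab, rfl⟩
    exact ⟨b, hb, a, ha, hab.symm, Sym2.eq_swap⟩

lemma coe_edgeBoundary_subset_edgeSet (A : Finset V) : ↑(edgeBoundary G A) ⊆ G.edgeSet := by
  rintro e he
  obtain ⟨a, -, b, -, hab, rfl⟩ := mem_edgeBoundary.1 he
  exact hab

lemma card_edgeBoundary_singleton (v : V) : #(edgeBoundary G {v}) = G.degree v := by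
  rw [card_edgeBoundary, ← G.card_neighborFinset_eq_degree]
  have : G.interedges {v} {v}ᶜ = {v} ×ˢ G.neighborFinset v := by
    ext ⟨a, b⟩
    simp only [SimpleGraph.mk_mem_interedges_iff, mem_singleton, mem_compl, mem_product,
      SimpleGraph.mem_neighborFinset]
    constructor
    · rintro ⟨rfl, -, h⟩; exact ⟨rfl, h⟩
    · rintro ⟨rfl, h⟩; exact ⟨rfl, h.ne', h⟩
  rw [this, card_product, card_singleton, one_mul]

lemma mk_mem_edgeBoundary_singleton {v w : V} (h : G.Adj v w) : s(v, w) ∈ edgeBoundary G {v} :=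
  mem_edgeBoundary.2 ⟨v, mem_singleton_self v, w, by simpa using h.ne', h, rfl⟩

lemma mem_of_mem_edgeBoundary_singleton {v : V} {e : Sym2 V} (he : e ∈ edgeBoundary G {v}) :
    v ∈ e := by
  obtain ⟨a, ha, b, -, -, rfl⟩ := mem_edgeBoundary.1 he
  rw [mem_singleton.1 ha]
  exact Sym2.mem_mk_left _ _

lemma edgeBoundary_singleton_inter_nonempty_iff {u v : V} (huv : u ≠ v) :
    (edgeBoundary G {u} ∩ edgeBoundary G {v}).Nonempty ↔ G.Adj u v := by
  constructor
  · rintro ⟨e, he⟩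
    rw [mem_inter] at he
    obtain ⟨a, ha, b, -, hab, rfl⟩ := mem_edgeBoundary.1 he.1
    obtain rfl := mem_singleton.1 ha
    rcases Sym2.mem_iff.1 (mem_of_mem_edgeBoundary_singleton he.2) with h | rfl
    · exact absurd h.symm huv
    · exact hab
  · intro h
    refine ⟨s(u, v), mem_inter.2 ⟨mk_mem_edgeBoundary_singleton h, ?_⟩⟩
    exact Sym2.eq_swap ▸ mk_mem_edgeBoundary_singleton h.symm

lemma eq_of_edgeBoundary_singleton_eq {u v x : V} (hux : G.Adj u x) (hvx : v ≠ x)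
    (h : edgeBoundary G {u} = edgeBoundary G {v}) : u = v := by
  have : s(u, x) ∈ edgeBoundary G {v} := h ▸ mk_mem_edgeBoundary_singleton hux
  rcases Sym2.mem_iff.1 (mem_of_mem_edgeBoundary_singleton this) with h | h
  · exact h.symm
  · exact absurd h hvx

lemma edgeBoundary_singleton_injective (h : ∀ v, 1 < G.degree v) :
    Function.Injective fun v => edgeBoundary G {v} := by
  intro u v huv
  obtain ⟨x, hx, hxv⟩ := exists_mem_ne (G.card_neighborFinset_eq_degree u ▸ h u) v
  exact eq_of_edgeBoundary_singleton_eq ((G.mem_neighborFinset u x).1 hx) hxv.symm huv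

lemma isEdgeCut_edgeBoundary (hG : G.Connected) {A : Finset V} (hA : A.Nonempty)
    (hA' : Aᶜ.Nonempty) : IsEdgeCut G (edgeBoundary G A) := by
  refine ⟨hG, coe_edgeBoundary_subset_edgeSet A, fun hc => ?_⟩
  obtain ⟨a, ha⟩ := hA
  obtain ⟨b, hb⟩ := hA'
  suffices ∀ {u w : V}, (G.deleteEdges ↑(edgeBoundary G A)).Walk u w → u ∈ A → w ∈ A from
    mem_compl.1 hb (this (hc.preconnected a b).some ha)
  intro u w p
  induction p with
  | nil => exact id
  | cons h _ ih =>
    intro hu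
    rw [SimpleGraph.deleteEdges_adj] at h
    refine ih (by_contra fun hv => h.2 ?_)
    exact mem_edgeBoundary.2 ⟨_, hu, _, hv, h.1, rfl⟩

lemma IsEdgeCut.exists_edgeBoundary_subset {X : Finset (Sym2 V)} (h : IsEdgeCut G X) :
    ∃ A : Finset V, A.Nonempty ∧ Aᶜ.Nonempty ∧ edgeBoundary G A ⊆ X := by
  classical
  obtain ⟨hc, -, hnc⟩ := h
  have : ¬(G.deleteEdges ↑X).Preconnected := fun hp =>
    hnc ((SimpleGraph.connected_iff _).2 ⟨hp, hc.nonempty⟩)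
  obtain ⟨u, v, huv⟩ : ∃ u v, ¬(G.deleteEdges ↑X).Reachable u v := by
    simpa [SimpleGraph.Preconnected] using this
  refine ⟨({w | (G.deleteEdges ↑X).Reachable u w} : Finset V), ⟨u, by simp⟩,
    ⟨v, by simpa using huv⟩, ?_⟩
  intro e he
  obtain ⟨a, ha, b, hb, hab, rfl⟩ := mem_edgeBoundary.1 he
  simp only [mem_filter, mem_univ, true_and] at ha hb
  by_contra hX
  exact hb (ha.trans (SimpleGraph.deleteEdges_adj.2 ⟨hab, hX⟩).reachable)

lemma exists_mem_edgeBoundary_eq (x : V) {A : Finset V} (hA : A.Nonempty) (hA' : Aᶜ.Nonempty) :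
    ∃ B : Finset V, x ∈ B ∧ Bᶜ.Nonempty ∧ edgeBoundary G B = edgeBoundary G A := by
  by_cases hx : x ∈ A
  · exact ⟨A, hx, hA', rfl⟩
  · exact ⟨Aᶜ, mem_compl.2 hx, by rwa [compl_compl], edgeBoundary_compl A⟩

lemma card_edgeBoundary_top (S : Finset V) :
    #(edgeBoundary ⊤ S) = #S * (Fintype.card V - #S) := by
  rw [card_edgeBoundary, ← card_compl, ← card_product]
  congr 1
  ext ⟨a, b⟩
  simp only [SimpleGraph.mk_mem_interedges_iff, mem_product, SimpleGraph.top_adj]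
  exact and_congr_right fun ha =>
    and_iff_left_of_imp fun hb => ne_of_mem_of_not_mem ha (mem_compl.1 hb)

end EdgeBoundary

lemma card_interedges_eq_sum {V : Type*} [DecidableEq V] (G : SimpleGraph V) [DecidableRel G.Adj]
    (s t : Finset V) : #(G.interedges s t) = ∑ x ∈ s, #{y ∈ t | G.Adj x y} := by
  rw [SimpleGraph.interedges, Rel.interedges_eq_biUnion, card_biUnion]
  · simp
  · intro x _ y _ hxy
    simp only [Function.onFun, Finset.disjoint_left, mem_map, Function.Embedding.coeFn_mk]
    rintro _ ⟨a, -, rfl⟩ ⟨b, -, h⟩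
    exact hxy (congrArg Prod.fst h).symm

section Mincuts

variable {V : Type*} [Fintype V] [DecidableEq V] {G : SimpleGraph V} [DecidableRel G.Adj]

lemma edgeConn_eq_of_forall_le {k : ℕ} (hG : G.Connected)
    (hk : ∃ A : Finset V, A.Nonempty ∧ Aᶜ.Nonempty ∧ #(edgeBoundary G A) = k)
    (hle : ∀ A : Finset V, A.Nonempty → Aᶜ.Nonempty → k ≤ #(edgeBoundary G A)) :
    edgeConn G = k := by
  obtain ⟨A₀, hA₀, hA₀', hcard⟩ := hk
  refine le_antisymm (Nat.sInf_le ⟨_, hcard, isEdgeCut_edgeBoundary hG hA₀ hA₀'⟩) ?_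
  refine le_csInf ⟨_, _, hcard, isEdgeCut_edgeBoundary hG hA₀ hA₀'⟩ ?_
  rintro _ ⟨X, rfl, hX⟩
  obtain ⟨A, hA, hA', hsub⟩ := hX.exists_edgeBoundary_subset
  exact (hle A hA hA').trans (card_le_card hsub)

lemma isMincut_iff_of_forall_le {k : ℕ} (hG : G.Connected)
    (hk : ∃ A : Finset V, A.Nonempty ∧ Aᶜ.Nonempty ∧ #(edgeBoundary G A) = k)
    (hle : ∀ A : Finset V, A.Nonempty → Aᶜ.Nonempty → k ≤ #(edgeBoundary G A))
    (X : Finset (Sym2 V)) :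
    IsMincut G X ↔
      ∃ A : Finset V, A.Nonempty ∧ Aᶜ.Nonempty ∧ #(edgeBoundary G A) = k ∧
        X = edgeBoundary G A := by
  rw [IsMincut, edgeConn_eq_of_forall_le hG hk hle]
  constructor
  · rintro ⟨hX, rfl⟩
    obtain ⟨A, hA, hA', hsub⟩ := hX.exists_edgeBoundary_subset
    have hX : edgeBoundary G A = X :=
      eq_of_subset_of_card_le hsub (hle A hA hA')
    exact ⟨A, hA, hA', by rw [hX], hX.symm⟩
  · rintro ⟨A, hA, hA', hcard, rfl⟩
    exact ⟨isEdgeCut_edgeBoundary hG hA hA', hcard⟩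

end Mincuts

section MincutGraph

variable {V : Type*} [DecidableEq V] {G : SimpleGraph V}

lemma mincutGraph_adj {X Y : {X : Finset (Sym2 V) // IsMincut G X}} :
    (mincutGraph G).Adj X Y ↔ X ≠ Y ∧ (X.1 ∩ Y.1).Nonempty := by
  rw [mincutGraph, SimpleGraph.fromRel_adj, inter_comm Y.1, or_self]

variable [Fintype V] [DecidableRel G.Adj]

lemma mincutGraph_adj_edgeBoundary_singleton {u v : V}
    (huv : edgeBoundary G {u} = edgeBoundary G {v} → u = v)
    (hu : IsMincut G (edgeBoundary G {u})) (hv : IsMincut G (edgeBoundary G {v})) :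
    (mincutGraph G).Adj ⟨_, hu⟩ ⟨_, hv⟩ ↔ G.Adj u v := by
  rw [mincutGraph_adj]
  by_cases huv' : u = v
  · subst huv'
    simp
  · rw [edgeBoundary_singleton_inter_nonempty_iff huv']
    exact and_iff_right fun h => huv' (huv (congrArg Subtype.val h))

end MincutGraph

def Equiv.sym2Congr {V W : Type*} (e : V ≃ W) : Sym2 V ≃ Sym2 W where
  toFun := Sym2.map e
  invFun := Sym2.map e.symm
  left_inv z := by simp [Sym2.map_map]
  right_inv z := by simp [Sym2.map_map]

namespace SimpleGraph.Iso

variable {V W : Type*} {G : SimpleGraph V} {H : SimpleGraph W}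

lemma isEdgeCut_finsetCongr_sym2Congr_iff (e : G ≃g H) (X : Finset (Sym2 V)) :
    IsEdgeCut H (e.toEquiv.sym2Congr.finsetCongr X) ↔ IsEdgeCut G X := by
  have hcoe : (↑(e.toEquiv.sym2Congr.finsetCongr X) : Set (Sym2 W)) = Sym2.map e '' ↑X := by
    simp [Equiv.finsetCongr_apply, Equiv.sym2Congr]
  have hdel : G.deleteEdges ↑X ≃g H.deleteEdges ↑(e.toEquiv.sym2Congr.finsetCongr X) :=
    ⟨e.toEquiv, fun {a b} => by
      rw [hcoe, deleteEdges_adj, deleteEdges_adj]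
      exact and_congr e.map_adj_iff
        (not_congr ((Sym2.map.injective e.injective).mem_set_image (a := s(a, b))))⟩
  have hedge : Sym2.map e ⁻¹' H.edgeSet = G.edgeSet := Set.ext fun _ => e.map_mem_edgeSet_iff
  rw [IsEdgeCut, IsEdgeCut, e.connected_iff, hdel.connected_iff, hcoe, Set.image_subset_iff,
    hedge]

lemma edgeConn_eq (e : G ≃g H) : edgeConn G = edgeConn H := by
  unfold edgeConn
  congr 1
  ext k
  exact e.toEquiv.sym2Congr.finsetCongr.exists_congr fun X => by
    rw [isEdgeCut_finsetCongr_sym2Congr_iff, Equiv.finsetCongr_apply, card_map]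

lemma isMincut_finsetCongr_sym2Congr_iff (e : G ≃g H) (X : Finset (Sym2 V)) :
    IsMincut H (e.toEquiv.sym2Congr.finsetCongr X) ↔ IsMincut G X := by
  rw [IsMincut, IsMincut, isEdgeCut_finsetCongr_sym2Congr_iff, e.edgeConn_eq,
    Equiv.finsetCongr_apply, card_map]

variable [DecidableEq V] [DecidableEq W]

protected noncomputable def mincutGraph (e : G ≃g H) : mincutGraph G ≃g mincutGraph H where
  toEquiv := e.toEquiv.sym2Congr.finsetCongr.subtypeEquiv fun X =>
    (isMincut_finsetCongr_sym2Congr_iff e X).symm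
  map_rel_iff' {X Y} := by
    rw [mincutGraph_adj, mincutGraph_adj]
    refine and_congr (Equiv.injective _).ne_iff ?_
    simp only [Equiv.subtypeEquiv_apply, Equiv.finsetCongr_apply, ← map_inter, map_nonempty]

end SimpleGraph.Iso

section Cone

variable {W : Type*} {H : SimpleGraph W}

@[simp] lemma coneGraph_adj_inl_inr {u : Unit} {w : W} : (coneGraph H).Adj (.inl u) (.inr w) := by
  simp [coneGraph]

@[simp] lemma coneGraph_adj_inr_inl {u : Unit} {w : W} : (coneGraph H).Adj (.inr w) (.inl u) := by
  simp [coneGraph]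

@[simp] lemma coneGraph_adj_inr_inr {w w' : W} :
    (coneGraph H).Adj (.inr w) (.inr w') ↔ H.Adj w w' := by
  simp only [coneGraph, SimpleGraph.fromRel_adj, ne_eq, Sum.inr.injEq, H.adj_comm w' w, or_self]
  exact and_iff_right_of_imp H.ne_of_adj

@[simp] lemma coneGraph_adj_inl_inl {u u' : Unit} : ¬(coneGraph H).Adj (.inl u) (.inl u') := by
  simp [coneGraph]

instance [DecidableRel H.Adj] : DecidableRel (coneGraph H).Adj
  | .inl _, .inl _ => isFalse coneGraph_adj_inl_inl
  | .inl _, .inr _ => isTrue coneGraph_adj_inl_inr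
  | .inr _, .inl _ => isTrue coneGraph_adj_inr_inl
  | .inr _, .inr _ => decidable_of_iff' _ coneGraph_adj_inr_inr

lemma connected_coneGraph (H : SimpleGraph W) : (coneGraph H).Connected := by
  have hapex : ∀ x, (coneGraph H).Reachable (.inl ()) x := by
    rintro (u | w)
    · rfl
    · exact coneGraph_adj_inl_inr.reachable
  exact ⟨fun x y => (hapex x).symm.trans (hapex y)⟩

end Cone

section ConeMincutGraph

variable {V : Type*} [Fintype V] [DecidableEq V] {G : SimpleGraph V} [DecidableRel G.Adj]

noncomputable def coneGraphIsoMincutGraph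
    (hinj : Function.Injective fun v => edgeBoundary G {v}) (M : Finset (Sym2 V))
    (hmincut : ∀ X, IsMincut G X ↔ X = M ∨ ∃ v, X = edgeBoundary G {v})
    (hM : ∀ v, M ≠ edgeBoundary G {v}) (hmeet : ∀ v, (M ∩ edgeBoundary G {v}).Nonempty) :
    coneGraph G ≃g mincutGraph G where
  toEquiv := Equiv.ofBijective
    (Sum.elim (fun _ => ⟨M, (hmincut M).2 (.inl rfl)⟩)
      fun v => ⟨_, (hmincut _).2 (.inr ⟨v, rfl⟩)⟩) <| by
    refine ⟨?_, fun X => ?_⟩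
    · rintro (u | u) (v | v) h <;> simp only [Sum.elim_inl, Sum.elim_inr, Subtype.mk.injEq] at h
      · rfl
      · exact absurd h (hM v)
      · exact absurd h.symm (hM u)
      · exact congrArg _ (hinj h)
    · rcases (hmincut X.1).1 X.2 with hX | ⟨v, hX⟩
      · exact ⟨.inl (), Subtype.ext hX.symm⟩
      · exact ⟨.inr v, Subtype.ext hX.symm⟩
  map_rel_iff' := by
    rintro (u | u) (v | v)
    · simp
    · exact iff_of_true (mincutGraph_adj.2 ⟨fun h => hM v (congrArg Subtype.val h), hmeet v⟩)
        coneGraph_adj_inl_inr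
    · exact iff_of_true (mincutGraph_adj.2 ⟨fun h => hM u (congrArg Subtype.val h).symm,
        inter_comm M _ ▸ hmeet u⟩) coneGraph_adj_inr_inl
    · exact (mincutGraph_adj_edgeBoundary_singleton (fun h => hinj h) _ _).trans
        coneGraph_adj_inr_inr.symm

end ConeMincutGraph

section ConeCuts

variable {W : Type*} [Fintype W] [DecidableEq W] {H : SimpleGraph W} [DecidableRel H.Adj]

lemma card_edgeBoundary_coneGraph {A : Finset (Unit ⊕ W)} (hA : .inl () ∈ A) :
    #(edgeBoundary (coneGraph H) A) = #A.toRightᶜ + #(edgeBoundary H A.toRight) := by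
  have hl : A.toLeft = {()} := by ext; simpa using hA
  have hcompl : ∀ (p : Unit ⊕ W → Prop) [DecidablePred p],
      #{y ∈ Aᶜ | p y} = #{w ∈ A.toRightᶜ | p (.inr w)} := by
    intro p _
    have : (Aᶜ).toLeft = ∅ := by ext; simpa using hA
    rw [card_filter, card_filter, sum_sum_eq_sum_toLeft_add_sum_toRight, this, sum_empty, zero_add]
    congr 1
    ext; simp
  rw [card_edgeBoundary, card_edgeBoundary, card_interedges_eq_sum, card_interedges_eq_sum,
    sum_sum_eq_sum_toLeft_add_sum_toRight, hl, sum_singleton, hcompl, filter_true_of_mem]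
  · simp only [hcompl, coneGraph_adj_inr_inr]
  · exact fun _ _ => coneGraph_adj_inl_inr

lemma compl_eq_map_inr_compl_toRight {A : Finset (Unit ⊕ W)} (hA : .inl () ∈ A) :
    Aᶜ = A.toRightᶜ.map .inr := by
  ext (u | w) <;> simp [hA]

lemma card_edgeBoundary_coneGraph_singleton_inr (w : W) :
    #(edgeBoundary (coneGraph H) {.inr w}) = H.degree w + 1 := by
  rw [← edgeBoundary_compl, card_edgeBoundary_coneGraph (by simp),
    ← card_edgeBoundary_singleton, ← edgeBoundary_compl {w}, add_comm]
  have : ({Sum.inr w}ᶜ : Finset (Unit ⊕ W)).toRight = {w}ᶜ := by ext; simp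
  rw [this, compl_compl, card_singleton]

lemma edgeBoundary_coneGraph_singleton_inr_injective :
    Function.Injective fun w : W => edgeBoundary (coneGraph H) {.inr w} := fun _ _ h =>
  Sum.inr_injective (α := Unit)
    (eq_of_edgeBoundary_singleton_eq coneGraph_adj_inr_inl (x := .inl ()) Sum.inr_ne_inl h)

variable {k : ℕ}

lemma lt_card_edgeBoundary_coneGraph
    (hle : ∀ T : Finset W, T.Nonempty → Tᶜ.Nonempty → k ≤ #(edgeBoundary H T))
    (hcard : k + 1 < Fintype.card W) {A : Finset (Unit ⊕ W)} (hA : .inl () ∈ A)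
    (hA' : Aᶜ.Nonempty) (hA'' : ∀ w, Aᶜ ≠ {.inr w}) :
    k + 1 < #(edgeBoundary (coneGraph H) A) := by
  rw [card_edgeBoundary_coneGraph hA]
  rw [compl_eq_map_inr_compl_toRight hA] at hA' hA''
  have hT' : 1 < #A.toRightᶜ := by
    rcases (map_nonempty.1 hA').exists_eq_singleton_or_nontrivial with ⟨w, hw⟩ | hT'
    · exact absurd (by simp [hw]) (hA'' w)
    · exact one_lt_card_iff_nontrivial.2 hT'
  rcases A.toRight.eq_empty_or_nonempty with hT | hT
  · simp [hT, edgeBoundary, hcard]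
  · have := hle _ hT (map_nonempty.1 hA')
    omega


lemma isMincut_coneGraph_iff (hreg : H.IsRegularOfDegree k)
    (hle : ∀ T : Finset W, T.Nonempty → Tᶜ.Nonempty → k ≤ #(edgeBoundary H T))
    (hcard : k + 1 < Fintype.card W) (X : Finset (Sym2 (Unit ⊕ W))) :
    IsMincut (coneGraph H) X ↔ ∃ w, X = edgeBoundary (coneGraph H) {.inr w} := by
  have hstar (w : W) : #(edgeBoundary (coneGraph H) {.inr w}) = k + 1 := by
    rw [card_edgeBoundary_coneGraph_singleton_inr, hreg w]
  have key {A : Finset (Unit ⊕ W)} (hA : A.Nonempty) (hA' : Aᶜ.Nonempty) :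
      k + 1 ≤ #(edgeBoundary (coneGraph H) A) ∧ (#(edgeBoundary (coneGraph H) A) = k + 1 →
        ∃ w, edgeBoundary (coneGraph H) A = edgeBoundary (coneGraph H) {.inr w}) := by
    obtain ⟨B, hB, hB', hBA⟩ := exists_mem_edgeBoundary_eq (G := coneGraph H) (.inl ()) hA hA'
    rw [← hBA]
    by_cases hsingle : ∃ w, Bᶜ = {.inr w}
    · obtain ⟨w, hw⟩ := hsingle
      have : edgeBoundary (coneGraph H) B = edgeBoundary (coneGraph H) {.inr w} := by
        rw [← edgeBoundary_compl, hw]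
      exact ⟨(this ▸ hstar w).ge, fun _ => ⟨w, this⟩⟩
    · have := lt_card_edgeBoundary_coneGraph hle hcard hB hB' (not_exists.1 hsingle)
      exact ⟨this.le, fun h => absurd h this.ne'⟩
  have hne (w : W) : ({.inr w} : Finset (Unit ⊕ W))ᶜ.Nonempty :=
    ⟨.inl (), mem_compl.2 (by simp)⟩
  obtain ⟨w₀⟩ : Nonempty W := Fintype.card_pos_iff.1 (by omega)
  rw [isMincut_iff_of_forall_le (connected_coneGraph H)
    ⟨_, singleton_nonempty _, hne w₀, hstar w₀⟩ fun A hA hA' => (key hA hA').1]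
  constructor
  · rintro ⟨A, hA, hA', hcard, rfl⟩
    exact (key hA hA').2 hcard
  · rintro ⟨w, rfl⟩
    exact ⟨_, singleton_nonempty _, hne w, hstar w, rfl⟩

noncomputable def isoMincutGraphConeGraph (hreg : H.IsRegularOfDegree k)
    (hle : ∀ T : Finset W, T.Nonempty → Tᶜ.Nonempty → k ≤ #(edgeBoundary H T))
    (hcard : k + 1 < Fintype.card W) : H ≃g mincutGraph (coneGraph H) where
  toEquiv := Equiv.ofBijective
    (fun w => ⟨_, (isMincut_coneGraph_iff hreg hle hcard _).2 ⟨w, rfl⟩⟩) <| by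
    refine ⟨fun u v h => edgeBoundary_coneGraph_singleton_inr_injective
      (congrArg Subtype.val h), fun X => ?_⟩
    · obtain ⟨w, hw⟩ := (isMincut_coneGraph_iff hreg hle hcard X.1).1 X.2
      exact ⟨w, Subtype.ext hw.symm⟩
  map_rel_iff' := (mincutGraph_adj_edgeBoundary_singleton
    (fun h => congrArg _ (edgeBoundary_coneGraph_singleton_inr_injective h)) _ _).trans
    coneGraph_adj_inr_inr

end ConeCuts

section BoxProd

variable {V W : Type*} [Fintype V] [DecidableEq V] [DecidableEq W]
  {G : SimpleGraph V} {H : SimpleGraph W} [DecidableRel G.Adj] [DecidableRel H.Adj]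

instance : DecidableRel (G □ H).Adj := fun _ _ => decidable_of_iff' _ SimpleGraph.boxProd_adj

def layer (A : Finset (V × W)) (w : W) : Finset V := {v | (v, w) ∈ A}

@[simp] lemma mem_layer {A : Finset (V × W)} {w : W} {v : V} : v ∈ layer A w ↔ (v, w) ∈ A := by
  simp [layer]

variable [Fintype W]

lemma layer_compl (A : Finset (V × W)) (w : W) : layer Aᶜ w = (layer A w)ᶜ := by
  ext; simp

lemma eq_layer_zero_product_union_layer_one_product (A : Finset (V × Fin 2)) :
    A = layer A 0 ×ˢ {0} ∪ layer A 1 ×ˢ {1} := by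
  ext ⟨v, j⟩
  fin_cases j <;> simp

lemma card_interedges_boxProd_filter_eq_eq (A : Finset (V × W)) (w : W) :
    #{p ∈ (G □ H).interedges A Aᶜ | p.1.2 = w ∧ p.2.2 = w} =
      #(G.interedges (layer A w) (layer A w)ᶜ) := by
  refine card_bij' (fun p _ => (p.1.1, p.2.1)) (fun q _ => ((q.1, w), (q.2, w))) ?_ ?_ ?_ ?_
  · rintro ⟨⟨a, j⟩, ⟨b, j'⟩⟩ hp
    simp only [mem_filter, SimpleGraph.mk_mem_interedges_iff, SimpleGraph.boxProd_adj,
      mem_compl] at hp ⊢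
    obtain ⟨⟨ha, hb, ⟨hab, -⟩ | ⟨hjj, -⟩⟩, rfl, rfl⟩ := hp
    · exact ⟨mem_layer.2 ha, by simpa using hb, hab⟩
    · exact absurd hjj H.irrefl
  · rintro ⟨a, b⟩ hq
    simp only [SimpleGraph.mk_mem_interedges_iff, mem_layer, mem_compl] at hq
    simpa [SimpleGraph.mk_mem_interedges_iff] using hq
  · rintro ⟨⟨a, j⟩, ⟨b, j'⟩⟩ hp
    simp only [mem_filter] at hp
    obtain ⟨-, rfl, rfl⟩ := hp
    rfl
  · intros; rfl

lemma card_interedges_boxProd_filter_of_adj (A : Finset (V × W)) {w w' : W} (hw : H.Adj w w') :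
    #{p ∈ (G □ H).interedges A Aᶜ | p.1.2 = w ∧ p.2.2 = w'} = #(layer A w \ layer A w') := by
  refine card_bij' (fun p _ => p.1.1) (fun a _ => ((a, w), (a, w'))) ?_ ?_ ?_ ?_
  · rintro ⟨⟨a, j⟩, ⟨b, j'⟩⟩ hp
    simp only [mem_filter, SimpleGraph.mk_mem_interedges_iff, SimpleGraph.boxProd_adj,
      mem_compl] at hp
    obtain ⟨⟨ha, hb, ⟨-, rfl⟩ | ⟨-, rfl⟩⟩, rfl, rfl⟩ := hp
    · exact absurd hw H.irrefl
    · simpa using And.intro ha hb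
  · rintro a ha
    simp only [mem_sdiff, mem_layer] at ha
    simpa [SimpleGraph.mk_mem_interedges_iff, hw] using ha
  · rintro ⟨⟨a, j⟩, ⟨b, j'⟩⟩ hp
    simp only [mem_filter, SimpleGraph.mk_mem_interedges_iff, SimpleGraph.boxProd_adj] at hp
    obtain ⟨⟨-, -, ⟨-, rfl⟩ | ⟨-, rfl⟩⟩, rfl, rfl⟩ := hp
    · exact absurd hw H.irrefl
    · rfl
  · intros; rfl

lemma card_edgeBoundary_boxProd_top_fin_two (A : Finset (V × Fin 2)) :
    #(edgeBoundary (G □ ⊤) A) =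
      #(edgeBoundary G (layer A 0)) + #(edgeBoundary G (layer A 1)) +
        #(layer A 0 \ layer A 1) + #(layer A 1 \ layer A 0) := by
  have h01 : (⊤ : SimpleGraph (Fin 2)).Adj 0 1 := by simp
  rw [card_edgeBoundary, card_eq_sum_card_fiberwise (f := fun p => (p.1.2, p.2.2)) (t := univ)
    fun _ _ => mem_univ _]
  simp only [Fintype.sum_prod_type, Fin.sum_univ_two, Prod.mk.injEq]
  rw [card_interedges_boxProd_filter_eq_eq, card_interedges_boxProd_filter_eq_eq,
    card_interedges_boxProd_filter_of_adj A h01, card_interedges_boxProd_filter_of_adj A h01.symm,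
    card_edgeBoundary, card_edgeBoundary]
  ring

end BoxProd

lemma mul_sub_cases {s n : ℕ} (hs : s ≤ n) :
    (s = 0 ∨ s = n) ∧ s * (n - s) = 0 ∨ 0 < s ∧ s < n ∧ n - 1 ≤ s * (n - s) := by
  rcases Nat.eq_zero_or_pos s with rfl | hs₀
  · simp
  rcases hs.eq_or_lt with rfl | hsn
  · simp
  refine .inr ⟨hs₀, hsn, ?_⟩
  obtain ⟨t, rfl⟩ := Nat.exists_eq_add_of_lt hsn
  rw [show s + t + 1 - s = t + 1 by omega, show s + t + 1 - 1 = s + t by omega]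
  nlinarith

lemma le_prism_count {n a b x y : ℕ} (ha : a ≤ n) (hb : b ≤ n) (hx : a ≤ x + b) (hy : b ≤ y + a)
    (hpos : 0 < a + b) (hsum : a + b ≤ n) : n ≤ a * (n - a) + b * (n - b) + x + y := by
  have := mul_sub_cases ha
  have := mul_sub_cases hb
  generalize a * (n - a) = p at *
  generalize b * (n - b) = q at *
  omega

lemma eq_of_prism_count_eq {n a b x y : ℕ} (hn : 3 ≤ n) (ha : a ≤ n) (hb : b ≤ n)
    (hx : a ≤ x + b) (hy : b ≤ y + a) (hpos : 0 < a + b) (hsum : a + b ≤ n)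
    (h : a * (n - a) + b * (n - b) + x + y = n) :
    a = 0 ∧ b = 1 ∨ a = 1 ∧ b = 0 ∨ a = 0 ∧ b = n ∨ a = n ∧ b = 0 := by
  have := mul_sub_cases ha
  have := mul_sub_cases hb
  generalize a * (n - a) = p at *
  generalize b * (n - b) = q at *
  omega

abbrev prismGraph (n : ℕ) : SimpleGraph (Fin n × Fin 2) :=
  (⊤ : SimpleGraph (Fin n)).boxProd (⊤ : SimpleGraph (Fin 2))

section Prism

variable {n : ℕ}

lemma card_edgeBoundary_prismGraph (A : Finset (Fin n × Fin 2)) :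
    #(edgeBoundary (prismGraph n) A) =
      #(layer A 0) * (n - #(layer A 0)) + #(layer A 1) * (n - #(layer A 1)) +
        #(layer A 0 \ layer A 1) + #(layer A 1 \ layer A 0) := by
  rw [card_edgeBoundary_boxProd_top_fin_two, card_edgeBoundary_top, card_edgeBoundary_top,
    Fintype.card_fin]

lemma card_layer_le (A : Finset (Fin n × Fin 2)) (j : Fin 2) : #(layer A j) ≤ n :=
  (card_le_univ _).trans_eq (Fintype.card_fin n)

lemma card_layer_add_pos {A : Finset (Fin n × Fin 2)} (hA : A.Nonempty) :
    0 < #(layer A 0) + #(layer A 1) := by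
  obtain ⟨⟨i, j⟩, h⟩ := hA
  have : 0 < #(layer A j) := card_pos.2 ⟨i, mem_layer.2 h⟩
  fin_cases j <;> simp only [Fin.zero_eta, Fin.mk_one] at this <;> omega

lemma exists_card_layer_add_le {A : Finset (Fin n × Fin 2)} (hA : A.Nonempty)
    (hA' : Aᶜ.Nonempty) :
    ∃ B : Finset (Fin n × Fin 2), B.Nonempty ∧ #(layer B 0) + #(layer B 1) ≤ n ∧
      edgeBoundary (prismGraph n) B = edgeBoundary (prismGraph n) A := by
  by_cases h : #(layer A 0) + #(layer A 1) ≤ n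
  · exact ⟨A, hA, h, rfl⟩
  · refine ⟨Aᶜ, hA', ?_, edgeBoundary_compl A⟩
    simp only [layer_compl, card_compl, Fintype.card_fin]
    omega

lemma le_card_edgeBoundary_prismGraph {A : Finset (Fin n × Fin 2)} (hA : A.Nonempty)
    (hA' : Aᶜ.Nonempty) : n ≤ #(edgeBoundary (prismGraph n) A) := by
  obtain ⟨B, hB, hsum, hBA⟩ := exists_card_layer_add_le hA hA'
  rw [← hBA, card_edgeBoundary_prismGraph]
  exact le_prism_count (card_layer_le B 0) (card_layer_le B 1) (card_le_card_sdiff_add_card)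
    (card_le_card_sdiff_add_card) (card_layer_add_pos hB) hsum

lemma eq_singleton_or_eq_univ_product_of_card_edgeBoundary_eq (hn : 3 ≤ n)
    {A : Finset (Fin n × Fin 2)} (hA : A.Nonempty) (hsum : #(layer A 0) + #(layer A 1) ≤ n)
    (h : #(edgeBoundary (prismGraph n) A) = n) :
    (∃ v, A = {v}) ∨ ∃ j, A = univ ×ˢ {j} := by
  rw [card_edgeBoundary_prismGraph] at h
  have hempty (j : Fin 2) (h : #(layer A j) = 0) : layer A j = ∅ := card_eq_zero.1 h
  have huniv (j : Fin 2) (h : #(layer A j) = n) : layer A j = univ :=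
    eq_univ_of_card _ (h.trans (Fintype.card_fin n).symm)
  rw [eq_layer_zero_product_union_layer_one_product A]
  rcases eq_of_prism_count_eq hn (card_layer_le A 0) (card_layer_le A 1)
    card_le_card_sdiff_add_card card_le_card_sdiff_add_card (card_layer_add_pos hA) hsum h with
    ⟨h₀, h₁⟩ | ⟨h₀, h₁⟩ | ⟨h₀, h₁⟩ | ⟨h₀, h₁⟩
  · obtain ⟨i, hi⟩ := card_eq_one.1 h₁
    exact .inl ⟨(i, 1), by simp [hempty 0 h₀, hi]⟩
  · obtain ⟨i, hi⟩ := card_eq_one.1 h₀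
    exact .inl ⟨(i, 0), by simp [hempty 1 h₁, hi]⟩
  · exact .inr ⟨1, by simp [hempty 0 h₀, huniv 1 h₁]⟩
  · exact .inr ⟨0, by simp [hempty 1 h₁, huniv 0 h₀]⟩

lemma degree_prismGraph (hn : 1 ≤ n) (v : Fin n × Fin 2)
    [Fintype ((prismGraph n).neighborSet v)] : (prismGraph n).degree v = n := by
  rw [SimpleGraph.degree_boxProd, complete_graph_degree, complete_graph_degree, Fintype.card_fin,
    Fintype.card_fin]
  omega

lemma connected_prismGraph (hn : 1 ≤ n) : (prismGraph n).Connected :=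
  have : Nonempty (Fin n) := ⟨⟨0, hn⟩⟩
  SimpleGraph.connected_boxProd.2 ⟨SimpleGraph.connected_top, SimpleGraph.connected_top⟩

lemma card_edgeBoundary_prismGraph_matching :
    #(edgeBoundary (prismGraph n) (univ ×ˢ {0})) = n := by
  have h₀ : layer (univ ×ˢ {0} : Finset (Fin n × Fin 2)) 0 = univ := by ext; simp
  have h₁ : layer (univ ×ˢ {0} : Finset (Fin n × Fin 2)) 1 = ∅ := by ext; simp
  rw [card_edgeBoundary_prismGraph, h₀, h₁]
  simp

lemma isMincut_prismGraph_iff (hn : 3 ≤ n) (X : Finset (Sym2 (Fin n × Fin 2))) :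
    IsMincut (prismGraph n) X ↔
      X = edgeBoundary (prismGraph n) (univ ×ˢ {0}) ∨ ∃ v, X = edgeBoundary (prismGraph n) {v} := by
  have hstar (v : Fin n × Fin 2) : #(edgeBoundary (prismGraph n) {v}) = n := by
    rw [card_edgeBoundary_singleton, degree_prismGraph (by omega)]
  have hstar' (v : Fin n × Fin 2) : ({v} : Finset _)ᶜ.Nonempty :=
    ⟨(v.1, v.2 + 1), by simp [Prod.ext_iff]⟩
  let v₀ : Fin n × Fin 2 := (⟨0, by omega⟩, 0)
  rw [isMincut_iff_of_forall_le (connected_prismGraph (by omega))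
    ⟨{v₀}, singleton_nonempty _, hstar' v₀, hstar v₀⟩ fun _ => le_card_edgeBoundary_prismGraph]
  constructor
  · rintro ⟨A, hA, hA', hcard, rfl⟩
    obtain ⟨B, hB, hsum, hBA⟩ := exists_card_layer_add_le hA hA'
    rw [← hBA] at hcard ⊢
    rcases eq_singleton_or_eq_univ_product_of_card_edgeBoundary_eq hn hB hsum hcard with
      ⟨v, rfl⟩ | ⟨j, rfl⟩
    · exact .inr ⟨v, rfl⟩
    · refine .inl ?_
      fin_cases j
      · rfl
      · rw [← edgeBoundary_compl]
        congr 1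
        ext ⟨i, j⟩
        fin_cases j <;> simp
  · rintro (rfl | ⟨v, rfl⟩)
    · exact ⟨_, ⟨v₀, by simp [v₀]⟩, ⟨(v₀.1, 1), by simp⟩,
        card_edgeBoundary_prismGraph_matching, rfl⟩
    · exact ⟨_, singleton_nonempty v, hstar' v, hstar v, rfl⟩

end Prism

section PrismMincutGraph

variable {n : ℕ}

lemma mk_mem_edgeBoundary_prismGraph_matching (i : Fin n) :
    s((i, 0), (i, 1)) ∈ edgeBoundary (prismGraph n) (univ ×ˢ {0}) :=
  mem_edgeBoundary.2 ⟨(i, 0), by simp, (i, 1), by simp, by simp, rfl⟩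

lemma edgeBoundary_prismGraph_matching_ne (hn : 2 ≤ n) (v : Fin n × Fin 2) :
    edgeBoundary (prismGraph n) (univ ×ˢ {0}) ≠ edgeBoundary (prismGraph n) {v} := by
  intro h
  obtain ⟨i, hi⟩ := Fintype.exists_ne_of_one_lt_card (by simp; omega) v.1
  have := mem_of_mem_edgeBoundary_singleton (h ▸ mk_mem_edgeBoundary_prismGraph_matching i)
  rw [Sym2.mem_iff] at this
  rcases this with rfl | rfl <;> exact hi rfl

lemma edgeBoundary_prismGraph_matching_inter_nonempty (v : Fin n × Fin 2) :
    (edgeBoundary (prismGraph n) (univ ×ˢ {0}) ∩ edgeBoundary (prismGraph n) {v}).Nonempty := by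
  obtain ⟨i, j⟩ := v
  refine ⟨s((i, 0), (i, 1)), mem_inter.2 ⟨mk_mem_edgeBoundary_prismGraph_matching i, ?_⟩⟩
  fin_cases j
  · exact mk_mem_edgeBoundary_singleton (by simp)
  · exact Sym2.eq_swap ▸ mk_mem_edgeBoundary_singleton (by simp)

noncomputable def coneGraphPrismGraphIsoMincutGraph (hn : 3 ≤ n) :
    coneGraph (prismGraph n) ≃g mincutGraph (prismGraph n) :=
  coneGraphIsoMincutGraph
    (edgeBoundary_singleton_injective fun v => by rw [degree_prismGraph (by omega)]; omega)
    _ (isMincut_prismGraph_iff hn) (edgeBoundary_prismGraph_matching_ne (by omega))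
    edgeBoundary_prismGraph_matching_inter_nonempty

noncomputable def prismGraphIsoMincutGraphConeGraph (hn : 3 ≤ n) :
    prismGraph n ≃g mincutGraph (coneGraph (prismGraph n)) :=
  have hcard : n + 1 < Fintype.card (Fin n × Fin 2) := by
    rw [Fintype.card_prod, Fintype.card_fin, Fintype.card_fin]
    omega
  -- `convert` reconciles the `Fintype (neighborSet v)` instance of `degree_boxProd` with the
  -- one coming from `DecidableRel`.
  isoMincutGraphConeGraph (k := n) (fun v => by convert degree_prismGraph (by omega) v)
    (fun _ => le_card_edgeBoundary_prismGraph) hcard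

end PrismMincutGraph

/-- For `n ≥ 3`, `X(Kₙ □ K₂) ≅ K₁ ∨ (Kₙ □ K₂)` and
`X(K₁ ∨ (Kₙ □ K₂)) ≅ Kₙ □ K₂`; hence `Kₙ □ K₂` has period 2 under the mincut operator. -/
theorem stmt_15 (n : ℕ) (hn : 3 ≤ n) :
    Nonempty (mincutGraph ((⊤ : SimpleGraph (Fin n)).boxProd (⊤ : SimpleGraph (Fin 2))) ≃g
      coneGraph ((⊤ : SimpleGraph (Fin n)).boxProd (⊤ : SimpleGraph (Fin 2)))) ∧
    Nonempty (mincutGraph (coneGraph ((⊤ : SimpleGraph (Fin n)).boxProd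
        (⊤ : SimpleGraph (Fin 2)))) ≃g
      (⊤ : SimpleGraph (Fin n)).boxProd (⊤ : SimpleGraph (Fin 2))) ∧
    Nonempty (mincutGraph (mincutGraph ((⊤ : SimpleGraph (Fin n)).boxProd
        (⊤ : SimpleGraph (Fin 2)))) ≃g
      (⊤ : SimpleGraph (Fin n)).boxProd (⊤ : SimpleGraph (Fin 2))) ∧
    ¬Nonempty (mincutGraph ((⊤ : SimpleGraph (Fin n)).boxProd (⊤ : SimpleGraph (Fin 2))) ≃g
      (⊤ : SimpleGraph (Fin n)).boxProd (⊤ : SimpleGraph (Fin 2))) := by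
  have iso₁ := coneGraphPrismGraphIsoMincutGraph hn
  have iso₂ := prismGraphIsoMincutGraphConeGraph hn
  refine ⟨⟨iso₁.symm⟩, ⟨iso₂.symm⟩, ⟨iso₁.symm.mincutGraph.trans iso₂.symm⟩, ?_⟩
  rintro ⟨f⟩
  have := Fintype.card_congr (iso₁.toEquiv.trans f.toEquiv)
  simp at this
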